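/- arXiv:2306.07327 — 4 statements merged into one kernel-verified Lean document; each statement's English description precedes it below -/
import Mathlib

section
/- Under the hypotheses of the previous statement (c_{ia} c̄ᵃ = (c̄)² for all i, and φ(t) = ∫(y)² → ∞), one has liminf_{t→∞} (x(t))² ≥ (c̄)². -/
open Real Set Filter intervalIntegral

/-- Under the hypotheses of the previous statement (`c_{ia} c̄ᵃ = (c̄)²` for all `i`,
and `φ(t) = ∫ (y)² → ∞`), one has `liminf_{t→∞} (x(t))² ≥ (c̄)²`. -/
theorem stmt_4 (n m : ℕ) (t₀ : ℝ) (c : Fin m → Fin n → ℝ) (cb : Fin n → ℝ)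
    (x : ℝ → Fin n → ℝ) (y : Fin m → ℝ → ℝ)
    (hyc : ∀ i, Continuous (y i))
    (hx : ∀ a, ∀ t, t₀ ≤ t →
      HasDerivAt (fun t => x t a)
        (-(x t a) * (∑ i, (y i t) ^ 2) + ∑ i, c i a * (y i t) ^ 2) t)
    (hcb : ∀ i, ∑ a, c i a * cb a = ∑ a, cb a * cb a)
    (hφ : Tendsto (fun t => ∫ s in t₀..t, ∑ i, (y i s) ^ 2) atTop atTop) :
    (∑ a, cb a * cb a) ≤ Filter.liminf (fun t => ∑ a, x t a * x t a) atTop := by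
  set K : ℝ := ∑ a, cb a * cb a with hK
  set Y : ℝ → ℝ := fun t => ∑ i, (y i t) ^ 2 with hY
  have hYc : Continuous Y := by
    apply continuous_finset_sum
    intro i _
    exact (hyc i).pow 2
  set φ : ℝ → ℝ := fun t => ∫ s in t₀..t, Y s with hφdef
  have hφd : ∀ t : ℝ, HasDerivAt φ (Y t) t := fun t =>
    (hYc.integral_hasStrictDerivAt t₀ t).hasDerivAt
  have hφt₀ : φ t₀ = 0 := by simp [hφdef]
  have hφnn : ∀ t, t₀ ≤ t → 0 ≤ φ t := fun t ht =>
    intervalIntegral.integral_nonneg ht fun s _ =>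
      Finset.sum_nonneg fun i _ => sq_nonneg _
  -- generic monotonicity helper
  have key : ∀ (F F' : ℝ → ℝ), (∀ t, t₀ ≤ t → HasDerivAt F (F' t) t) →
      (∀ t, t₀ ≤ t → 0 ≤ F' t) → ∀ t, t₀ ≤ t → F t₀ ≤ F t := by
    intro F F' hF hF' t ht
    have hmono : MonotoneOn F (Ici t₀) := by
      apply monotoneOn_of_deriv_nonneg (convex_Ici t₀)
      · exact fun s hs => (hF s hs).continuousAt.continuousWithinAt
      · intro s hs
        rw [interior_Ici] at hs
        exact (hF s hs.le).differentiableAt.differentiableWithinAt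
      · intro s hs
        rw [interior_Ici] at hs
        rw [(hF s hs.le).deriv]
        exact hF' s hs.le
    exact hmono self_mem_Ici ht ht
  set u : ℝ → ℝ := fun t => ∑ a, cb a * x t a with hu
  -- derivative of u
  have hud : ∀ t, t₀ ≤ t → HasDerivAt u ((K - u t) * Y t) t := by
    intro t ht
    have h1 : HasDerivAt u
        (∑ a, cb a * (-(x t a) * Y t + ∑ i, c i a * (y i t) ^ 2)) t := by
      apply HasDerivAt.fun_sum
      intro a _
      exact (hx a t ht).const_mul (cb a)
    have h2 : ∑ a, cb a * ∑ i, c i a * (y i t) ^ 2 = K * Y t := by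
      simp_rw [Finset.mul_sum]
      rw [Finset.sum_comm]
      have h2' : ∀ i : Fin m, ∑ a, cb a * (c i a * (y i t) ^ 2)
          = K * (y i t) ^ 2 := by
        intro i
        rw [← hcb i, Finset.sum_mul]
        exact Finset.sum_congr rfl fun a _ => by ring
      simp_rw [h2', hY, ← Finset.mul_sum]
    have h3 : ∑ a, cb a * (-(x t a) * Y t + ∑ i, c i a * (y i t) ^ 2)
        = (K - u t) * Y t := by
      simp only [mul_add, Finset.sum_add_distrib, h2]
      have hA : ∑ a, cb a * (-(x t a) * Y t) = -(u t * Y t) := by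
        have : ∀ a : Fin n, cb a * (-(x t a) * Y t)
            = -(cb a * x t a * Y t) := fun a => by ring
        simp_rw [this]
        rw [Finset.sum_neg_distrib, ← Finset.sum_mul]
      rw [hA]; ring
    exact h3 ▸ h1
  -- the function (u - K) * exp φ is constant on [t₀, ∞)
  set g : ℝ → ℝ := fun t => (u t - K) * Real.exp (φ t) with hg
  have hgd : ∀ t, t₀ ≤ t → HasDerivAt g 0 t := by
    intro t ht
    have : HasDerivAt g _ t := (((hud t ht).sub_const K).fun_mul (hφd t).exp)
    convert this using 1
    ring
  have hconst : ∀ t, t₀ ≤ t → g t = g t₀ := by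
    intro t ht
    have := constant_of_has_deriv_right_zero
      (f := g) (a := t₀) (b := t)
      (fun s hs => ((hgd s hs.1).continuousAt).continuousWithinAt)
      (fun s hs => ((hgd s hs.1).hasDerivWithinAt))
    exact this t ⟨ht, le_refl t⟩
  -- u t = K + (u t₀ - K) * exp (-φ t) for t ≥ t₀
  have huval : ∀ t, t₀ ≤ t → u t = K + (u t₀ - K) * Real.exp (-φ t) := by
    intro t ht
    have h := hconst t ht
    rw [hg] at h
    simp only [hφt₀, Real.exp_zero, mul_one] at h
    rw [Real.exp_neg]
    have hexp : (0:ℝ) < Real.exp (φ t) := Real.exp_pos _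
    field_simp
    nlinarith [h, hexp]
  -- hence u → K
  have huK : Tendsto u atTop (nhds K) := by
    have hexp : Tendsto (fun t => Real.exp (-φ t)) atTop (nhds 0) :=
      Real.tendsto_exp_atBot.comp (tendsto_neg_atTop_atBot.comp hφ)
    have h1 : Tendsto (fun t => K + (u t₀ - K) * Real.exp (-φ t)) atTop
        (nhds (K + (u t₀ - K) * 0)) :=
      tendsto_const_nhds.add (hexp.const_mul _)
    rw [mul_zero, add_zero] at h1
    apply h1.congr'
    filter_upwards [eventually_ge_atTop t₀] with t ht
    exact (huval t ht).symm
  -- pointwise inequality 2u - K ≤ ∑ x²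
  have hle : ∀ t, 2 * u t - K ≤ ∑ a, x t a * x t a := by
    intro t
    have h0 : (0:ℝ) ≤ ∑ a, (x t a - cb a) ^ 2 :=
      Finset.sum_nonneg fun a _ => sq_nonneg _
    have hexp : ∑ a, (x t a - cb a) ^ 2
        = (∑ a, x t a * x t a) - 2 * u t + K := by
      have h' : ∀ a : Fin n, (x t a - cb a) ^ 2
          = x t a * x t a - 2 * (cb a * x t a) + cb a * cb a := fun a => by ring
      simp_rw [h', Finset.sum_add_distrib, Finset.sum_sub_distrib,
        ← Finset.mul_sum]
      rfl
    linarith [hexp ▸ h0]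
  -- boundedness of x (for coboundedness of the liminf)
  have hxbound : ∀ a t, t₀ ≤ t →
      |x t a| ≤ |x t₀ a| + 2 * ∑ i, |c i a| := by
    intro a t ht
    set M : ℝ := ∑ i, |c i a| with hM
    have hM0 : 0 ≤ M := Finset.sum_nonneg fun i _ => abs_nonneg _
    have hbd : ∀ s, |∑ i, c i a * (y i s) ^ 2| ≤ M * Y s := by
      intro s
      calc |∑ i, c i a * (y i s) ^ 2| ≤ ∑ i, |c i a * (y i s) ^ 2| :=
            Finset.abs_sum_le_sum_abs _ _
        _ = ∑ i, |c i a| * (y i s) ^ 2 := by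
            refine Finset.sum_congr rfl fun i _ => ?_
            rw [abs_mul, abs_of_nonneg (sq_nonneg (y i s))]
        _ ≤ ∑ i, M * (y i s) ^ 2 := by
            refine Finset.sum_le_sum fun i _ => ?_
            exact mul_le_mul_of_nonneg_right
              (Finset.single_le_sum (fun j _ => abs_nonneg (c j a))
                (Finset.mem_univ i)) (sq_nonneg _)
        _ = M * Y s := (Finset.mul_sum _ _ _).symm
    have hh : ∀ s, t₀ ≤ s → HasDerivAt (fun r => x r a * Real.exp (φ r))
        ((∑ i, c i a * (y i s) ^ 2) * Real.exp (φ s)) s := by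
      intro s hs
      have : HasDerivAt (fun r => x r a * Real.exp (φ r)) _ s := (hx a s hs).fun_mul (hφd s).exp
      convert this using 1
      ring
    have hE1 : (1:ℝ) ≤ Real.exp (φ t) := Real.one_le_exp (hφnn t ht)
    have hEpos : (0:ℝ) < Real.exp (φ t) := Real.exp_pos _
    -- upper bound
    have hup : x t a ≤ |x t₀ a| + M := by
      have hkey := key
        (fun r => M * Real.exp (φ r) - x r a * Real.exp (φ r))
        (fun r => M * (Real.exp (φ r) * Y r) -
          (∑ i, c i a * (y i r) ^ 2) * Real.exp (φ r))
        (fun s hs => (((hφd s).exp).const_mul M).sub (hh s hs))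
        (fun s hs => by
          show 0 ≤ M * (Real.exp (φ s) * Y s) -
            (∑ i, c i a * (y i s) ^ 2) * Real.exp (φ s)
          have h1 := (abs_le.mp (hbd s)).2
          nlinarith [mul_le_mul_of_nonneg_right h1 (Real.exp_pos (φ s)).le])
        t ht
      simp only [hφt₀, Real.exp_zero, mul_one] at hkey
      nlinarith [le_abs_self (x t₀ a), neg_abs_le (x t₀ a)]
    -- lower bound
    have hlo : -(|x t₀ a| + M) ≤ x t a := by
      have hkey := key
        (fun r => x r a * Real.exp (φ r) + M * Real.exp (φ r))
        (fun r => (∑ i, c i a * (y i r) ^ 2) * Real.exp (φ r) +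
          M * (Real.exp (φ r) * Y r))
        (fun s hs => (hh s hs).add (((hφd s).exp).const_mul M))
        (fun s hs => by
          show 0 ≤ (∑ i, c i a * (y i s) ^ 2) * Real.exp (φ s) +
            M * (Real.exp (φ s) * Y s)
          have h1 := (abs_le.mp (hbd s)).1
          nlinarith [mul_le_mul_of_nonneg_right h1 (Real.exp_pos (φ s)).le])
        t ht
      simp only [hφt₀, Real.exp_zero, mul_one] at hkey
      nlinarith [le_abs_self (x t₀ a), neg_abs_le (x t₀ a)]
    rw [abs_le]
    constructor <;> nlinarith
  have hvbdd : Filter.IsBoundedUnder (· ≤ ·) atTop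
      (fun t => ∑ a, x t a * x t a) := by
    refine ⟨∑ a, (|x t₀ a| + 2 * ∑ i, |c i a|) ^ 2, ?_⟩
    rw [Filter.eventually_map]
    filter_upwards [eventually_ge_atTop t₀] with t ht
    refine Finset.sum_le_sum fun a _ => ?_
    have h1 := hxbound a t ht
    nlinarith [abs_nonneg (x t a), le_abs_self (x t a), neg_abs_le (x t a)]
  -- conclude via liminf
  have hfK : Tendsto (fun t => 2 * u t - K) atTop (nhds K) := by
    have := (huK.const_mul 2).sub_const K
    simpa [two_mul] using this
  calc K = Filter.liminf (fun t => 2 * u t - K) atTop := hfK.liminf_eq.symm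
    _ ≤ Filter.liminf (fun t => ∑ a, x t a * x t a) atTop :=
        Filter.liminf_le_liminf (Eventually.of_forall hle)
          hfK.isBoundedUnder_ge hvbdd.isCoboundedUnder_ge
end

section
/- Let A_{ij} = Σₐ c_{ia} c_{ja} with the m×n matrix c of rank m (so A is invertible), and set k = Σ_{i,j}(A⁻¹)^{ij}. Then the point x̄ᵃ = (1/k) Σ_{i,j} cᵢᵃ (A⁻¹)^{ij}, (ȳⁱ)² = ((k-1)/k²) Σⱼ (A⁻¹)^{ij} satisfies the critical-point equations: c_{ia} x̄ᵃ = (x̄)² for every i, Σᵢ c_{ia}(ȳⁱ)² = x̄ₐ (ȳ)², and (x̄)² + (ȳ)² = 1, provided k ≠ 0. -/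
/-!
Write `v = A⁻¹ 𝟙` for the vector of row sums of `A⁻¹`, so `k = Σ vᵢ` and `x̄ = k⁻¹ cᵀ v`,
`ȳ² = ((k - 1)/k²) v`. Since `c cᵀ v = 𝟙`, every `(c x̄)ᵢ` equals `1/k`, and
`|x̄|² = k⁻² vᵀ c cᵀ v = k⁻² Σ vᵢ = 1/k`; moreover `cᵀ ȳ² = ((k - 1)/k) x̄` and `Σ ȳᵢ² = (k - 1)/k`.
All three equations follow at once.
-/

open Matrix

variable {K ι α : Type*} [Field K] [Fintype ι] [Fintype α]

theorem Matrix.isUnit_det_of_sum_inv_ne_zero [DecidableEq ι] {A : Matrix ι ι K}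
    (h : ∑ i, ∑ j, A⁻¹ i j ≠ 0) : IsUnit A.det := by
  by_contra hA
  simp [nonsing_inv_apply_not_isUnit A hA] at h

section GramSystem

variable (c : Matrix ι α K) {v : ι → K} (hv : (c * cᵀ) *ᵥ v = 1)
include hv

theorem mulVec_transpose_mulVec_eq_one : c *ᵥ (cᵀ *ᵥ v) = 1 := by
  rw [mulVec_mulVec, hv]

theorem dotProduct_self_transpose_mulVec : (cᵀ *ᵥ v) ⬝ᵥ (cᵀ *ᵥ v) = ∑ i, v i := by
  rw [dotProduct_mulVec, vecMul_transpose, mulVec_transpose_mulVec_eq_one c hv, one_dotProduct]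

theorem gram_critical_point {k : K} (hk : ∑ i, v i = k) (hk0 : k ≠ 0)
    {x : α → K} (hx : x = k⁻¹ • cᵀ *ᵥ v) {y : ι → K} (hy : y = ((k - 1) / k ^ 2) • v) :
    (∀ i, (c *ᵥ x) i = x ⬝ᵥ x) ∧ (∀ a, (cᵀ *ᵥ y) a = x a * ∑ i, y i) ∧
      x ⬝ᵥ x + ∑ i, y i = 1 := by
  have hxx : x ⬝ᵥ x = k⁻¹ := by
    rw [hx, smul_dotProduct, dotProduct_smul, dotProduct_self_transpose_mulVec c hv, hk,
      smul_eq_mul, smul_eq_mul]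
    field_simp
  have hys : ∑ i, y i = (k - 1) / k := by
    simp only [hy, Pi.smul_apply, smul_eq_mul, ← Finset.mul_sum, hk]
    field_simp
  refine ⟨fun i => ?_, fun a => ?_, by rw [hxx, hys]; field_simp; ring⟩
  · rw [hxx, hx, mulVec_smul, mulVec_transpose_mulVec_eq_one c hv]
    simp
  · rw [hys, hy, hx, mulVec_smul]
    simp only [Pi.smul_apply, smul_eq_mul]
    field_simp

end GramSystem

theorem stmt_7_general (m n : ℕ) (c : Matrix (Fin m) (Fin n) ℝ)
    (A : Matrix (Fin m) (Fin m) ℝ) (hA : A = c * cᵀ)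
    (k : ℝ) (hk : k = ∑ i, ∑ j, A⁻¹ i j) (hk0 : k ≠ 0)
    (xb : Fin n → ℝ) (hxb : ∀ a, xb a = (1 / k) * ∑ i, ∑ j, c i a * A⁻¹ i j)
    (ybsq : Fin m → ℝ) (hybsq : ∀ i, ybsq i = ((k - 1) / k ^ 2) * ∑ j, A⁻¹ i j) :
    (∀ i, ∑ a, c i a * xb a = ∑ a, xb a * xb a) ∧
    (∀ a, ∑ i, c i a * ybsq i = xb a * ∑ i, ybsq i) ∧
    (∑ a, xb a * xb a) + (∑ i, ybsq i) = 1 := by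
  have hdet : IsUnit A.det := isUnit_det_of_sum_inv_ne_zero (hk ▸ hk0)
  have hv : (c * cᵀ) *ᵥ (A⁻¹ *ᵥ 1) = 1 := by
    rw [← hA, mulVec_mulVec, mul_nonsing_inv A hdet, one_mulVec]
  have hrow : ∀ i, (A⁻¹ *ᵥ 1) i = ∑ j, A⁻¹ i j := fun i => by simp [mulVec, dotProduct]
  have hkv : ∑ i, (A⁻¹ *ᵥ 1) i = k := by simp only [hrow, hk]
  have hx : xb = k⁻¹ • cᵀ *ᵥ (A⁻¹ *ᵥ 1) := by
    ext a
    rw [hxb, Pi.smul_apply, smul_eq_mul, one_div]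
    simp only [mulVec, dotProduct, transpose_apply, Pi.one_apply, mul_one, Finset.mul_sum]
  have hy : ybsq = ((k - 1) / k ^ 2) • (A⁻¹ *ᵥ 1) := by
    ext i
    simp only [hybsq, hrow, Pi.smul_apply, smul_eq_mul]
  obtain ⟨hcx, hcy, hsum⟩ := gram_critical_point c hv hkv hk0 hx hy
  exact ⟨hcx, hcy, hsum⟩

/-- For `A = c cᵀ` the Gram matrix of an `m×n` matrix `c` of rank `m`, with
`k = Σᵢⱼ (A⁻¹)ᵢⱼ ≠ 0`, the point `x̄ᵃ = (1/k) Σᵢⱼ cᵢᵃ (A⁻¹)ᵢⱼ`,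
`(ȳⁱ)² = ((k-1)/k²) Σⱼ (A⁻¹)ᵢⱼ` satisfies the critical-point equations. -/
theorem stmt_7 (m n : ℕ) (c : Matrix (Fin m) (Fin n) ℝ)
    (hrank : c.rank = m)
    (A : Matrix (Fin m) (Fin m) ℝ) (hA : A = c * cᵀ)
    (k : ℝ) (hk : k = ∑ i, ∑ j, A⁻¹ i j) (hk0 : k ≠ 0)
    (xb : Fin n → ℝ) (hxb : ∀ a, xb a = (1 / k) * ∑ i, ∑ j, c i a * A⁻¹ i j)
    (ybsq : Fin m → ℝ) (hybsq : ∀ i, ybsq i = ((k - 1) / k ^ 2) * ∑ j, A⁻¹ i j) :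
    (∀ i, ∑ a, c i a * xb a = ∑ a, xb a * xb a) ∧
    (∀ a, ∑ i, c i a * ybsq i = xb a * ∑ i, ybsq i) ∧
    (∑ a, xb a * xb a) + (∑ i, ybsq i) = 1 :=
  stmt_7_general m n c A hA k hk hk0 xb hxb ybsq hybsq
end

section
/- Under the critical-point identities c_{ia}x̄ᵃ = (x̄)² and Σᵢ c_{ia}(ȳⁱ)² = x̄ₐ(ȳ)², any solution with yⁱ(t) > 0 satisfies the integral identity ∏ᵢ yⁱ(t)^{(ȳⁱ)²} = [∏ᵢ yⁱ(t₀)^{(ȳⁱ)²}] · exp( (ȳ)² ∫_{t₀}^t [(x(s))² - x̄ₐxᵃ(s)] ds ). Moreover, if (ȳⁱ)² ≥ 0 for all i and 0 < yⁱ(t) ≤ 1 for all t, then ∫_{t₀}^t [(x(s))² - x̄ₐ xᵃ(s)] ds ≤ ω, where ω = -(1/(ȳ)²) ln ∏ᵢ yⁱ(t₀)^{(ȳⁱ)²}. -/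
open Real Set intervalIntegral

/-- Under the critical-point identities `c_{ia}x̄ᵃ = (x̄)²` and
`Σᵢ c_{ia}(ȳⁱ)² = x̄ₐ(ȳ)²`, any solution with `0 < yⁱ ≤ 1` satisfies
`∏ᵢ yⁱ(t)^{(ȳⁱ)²} = ∏ᵢ yⁱ(t₀)^{(ȳⁱ)²} · exp((ȳ)² ∫ [(x)² - x̄·x])`, and if all
`(ȳⁱ)² ≥ 0` then `∫_{t₀}^t [(x)² - x̄·x] ≤ ω` where
`ω = -(1/(ȳ)²) ln ∏ᵢ yⁱ(t₀)^{(ȳⁱ)²}`. -/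
theorem stmt_9 (n m : ℕ) (t₀ : ℝ) (c : Fin m → Fin n → ℝ)
    (x : ℝ → Fin n → ℝ) (y : Fin m → ℝ → ℝ)
    (xb : Fin n → ℝ) (ybsq : Fin m → ℝ)
    (hxc : ∀ a, Continuous fun t => x t a)
    (hypos : ∀ i t, t₀ ≤ t → 0 < y i t)
    (hyle : ∀ i t, t₀ ≤ t → y i t ≤ 1)
    (hy : ∀ i, ∀ t, t₀ ≤ t →
      HasDerivAt (y i) ((∑ a, x t a * x t a - ∑ a, c i a * x t a) * y i t) t)
    (hxb : ∀ i, ∑ a, c i a * xb a = ∑ a, xb a * xb a)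
    (hyb : ∀ a, ∑ i, c i a * ybsq i = xb a * ∑ i, ybsq i)
    (hybpos : 0 < ∑ i, ybsq i) :
    (∀ t, t₀ ≤ t →
      (∏ i, (y i t) ^ (ybsq i))
        = (∏ i, (y i t₀) ^ (ybsq i)) *
          Real.exp ((∑ i, ybsq i) *
            ∫ s in t₀..t, ((∑ a, x s a * x s a) - ∑ a, xb a * x s a))) ∧
    ((∀ i, 0 ≤ ybsq i) → ∀ t, t₀ ≤ t →
      (∫ s in t₀..t, ((∑ a, x s a * x s a) - ∑ a, xb a * x s a))
        ≤ -(1 / ∑ i, ybsq i) * Real.log (∏ i, (y i t₀) ^ (ybsq i))) := by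
  set S := ∑ i, ybsq i with hS
  set g : ℝ → ℝ := fun s => (∑ a, x s a * x s a) - ∑ a, xb a * x s a with hg
  have hgc : Continuous g := by
    apply Continuous.sub <;> exact continuous_finset_sum _ (fun a _ => by
      first
        | exact (hxc a).mul (hxc a)
        | exact continuous_const.mul (hxc a))
  set F : ℝ → ℝ := fun s => ∑ i, ybsq i * Real.log (y i s) with hF
  have key : ∀ s, (∑ i, ybsq i * ((∑ a, x s a * x s a) - ∑ a, c i a * x s a))
      = S * g s := by
    intro s
    have h1 : ∑ i, ybsq i * ∑ a, c i a * x s a = ∑ a, (xb a * S) * x s a := by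
      simp only [Finset.mul_sum]
      rw [Finset.sum_comm]
      refine Finset.sum_congr rfl fun a _ => ?_
      rw [← hyb a, Finset.sum_mul]
      exact Finset.sum_congr rfl fun i _ => by ring
    simp only [mul_sub, Finset.sum_sub_distrib, h1, ← Finset.sum_mul]
    show _ = S * ((∑ a, x s a * x s a) - ∑ a, xb a * x s a)
    rw [mul_sub]
    congr 1
    rw [Finset.mul_sum]
    exact Finset.sum_congr rfl fun a _ => by ring
  have hFd : ∀ s, t₀ ≤ s → HasDerivAt F (S * g s) s := by
    intro s hs
    rw [← key s]
    apply HasDerivAt.fun_sum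
    intro i _
    have h := (hy i s hs).log (ne_of_gt (hypos i s hs))
    have h2 : ((∑ a, x s a * x s a - ∑ a, c i a * x s a) * y i s) / y i s
        = (∑ a, x s a * x s a) - ∑ a, c i a * x s a := by
      rw [mul_div_assoc, div_self (ne_of_gt (hypos i s hs)), mul_one]
    rw [h2] at h
    exact (h.const_mul (ybsq i))
  have hFint : ∀ t, t₀ ≤ t → F t - F t₀ = S * ∫ s in t₀..t, g s := by
    intro t ht
    rw [← intervalIntegral.integral_const_mul]
    rw [intervalIntegral.integral_eq_sub_of_hasDerivAt
      (fun s hs => hFd s (by rw [Set.uIcc_of_le ht] at hs; exact hs.1))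
      ((continuous_const.mul hgc).intervalIntegrable t₀ t)]
  have hprod : ∀ t, t₀ ≤ t → (∏ i, (y i t) ^ (ybsq i)) = Real.exp (F t) := by
    intro t ht
    rw [hF]
    rw [Real.exp_sum]
    exact Finset.prod_congr rfl fun i _ =>
      ((Real.rpow_def_of_pos (hypos i t ht) (ybsq i)).trans (by rw [mul_comm]))
  constructor
  · intro t ht
    rw [hprod t ht, hprod t₀ le_rfl, ← Real.exp_add]
    congr 1
    have := hFint t ht
    linarith
  · intro hnn t ht
    have hlog : Real.log (∏ i, (y i t₀) ^ (ybsq i)) = F t₀ := by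
      rw [hprod t₀ le_rfl, Real.log_exp]
    rw [hlog]
    have hFt : F t ≤ 0 := by
      apply Finset.sum_nonpos
      intro i _
      exact mul_nonpos_of_nonneg_of_nonpos (hnn i)
        (Real.log_nonpos (le_of_lt (hypos i t ht)) (hyle i t ht))
    have hi := hFint t ht
    have h3 : (∫ s in t₀..t, g s) ≤ (-F t₀) / S := by
      rw [le_div_iff₀ hybpos]
      nlinarith
    have h4 : -(1 / S) * F t₀ = (-F t₀) / S := by field_simp
    rw [h4]
    exact h3
end

section
/- Assume: (i) c̄ₐxᵃ(t) → (x̄)² as t → ∞ with (x̄)² = 1 - (ȳ)² < 1, (ii) ∫_{t₀}^t [(x)² - x̄·x] ds ≤ ω for all t, and (iii) (x(t))² + (y(t))² = 1. Then for any 0 < δ < (ȳ)² there is a time t_δ such that for all t ≥ t_δ, φ(t) := ∫_{t₀}^t (y(s))² ds ≥ δ t. In particular φ(t) → ∞ at least linearly. -/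
open Real Set Filter intervalIntegral

/-- If `x̄·x(t) → (x̄)² = 1 - (ȳ)² < 1`, the integral of `(x)² - x̄·x` is bounded
by `ω`, and `(x)² + (y)² = 1` pointwise, then for any `0 < δ < (ȳ)²` there is a
time `t_δ` with `φ(t) = ∫_{t₀}^t (y)² ≥ δ t` for all `t ≥ t_δ`. -/
theorem stmt_10 (n m : ℕ) (t₀ ω : ℝ) (x : ℝ → Fin n → ℝ) (y : ℝ → Fin m → ℝ)
    (xb : Fin n → ℝ) (ybsq : ℝ)
    (hxc : ∀ a, Continuous fun t => x t a)
    (hyc : ∀ i, Continuous fun t => y t i)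
    (hyb : 0 < ybsq) (hyb1 : ybsq ≤ 1)
    (hsum : (∑ a, xb a * xb a) + ybsq = 1)
    (hsphere : ∀ t, t₀ ≤ t → (∑ a, x t a * x t a) + (∑ i, y t i * y t i) = 1)
    (hlim : Tendsto (fun t => ∑ a, xb a * x t a) atTop (nhds (∑ a, xb a * xb a)))
    (hint : ∀ t, t₀ ≤ t →
      (∫ s in t₀..t, ((∑ a, x s a * x s a) - ∑ a, xb a * x s a)) ≤ ω) :
    ∀ δ, 0 < δ → δ < ybsq → ∃ tδ, ∀ t, tδ ≤ t →
      δ * t ≤ ∫ s in t₀..t, ∑ i, y s i * y s i := by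
  intro δ hδ hδy
  set f : ℝ → ℝ := fun s => ∑ a, x s a * x s a with hf
  set g : ℝ → ℝ := fun s => ∑ a, xb a * x s a with hg
  set h : ℝ → ℝ := fun s => ∑ i, y s i * y s i with hh
  have hfc : Continuous f := continuous_finset_sum _ fun a _ => (hxc a).mul (hxc a)
  have hgc : Continuous g := continuous_finset_sum _ fun a _ => continuous_const.mul (hxc a)
  have hhc : Continuous h := continuous_finset_sum _ fun i _ => (hyc i).mul (hyc i)
  have hxb2 : (∑ a, xb a * xb a) = 1 - ybsq := by linarith
  -- pointwise bounds
  have hh0 : ∀ s, 0 ≤ h s := fun s => Finset.sum_nonneg fun i _ => mul_self_nonneg _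
  have hf0 : ∀ s, 0 ≤ f s := fun s => Finset.sum_nonneg fun a _ => mul_self_nonneg _
  have hf1 : ∀ s, t₀ ≤ s → f s ≤ 1 := by
    intro s hs
    have := hsphere s hs
    have := hh0 s
    simp only [hf, hh] at *
    linarith
  have hg1 : ∀ s, t₀ ≤ s → g s ≤ 1 := by
    intro s hs
    have hcs := Finset.sum_mul_sq_le_sq_mul_sq Finset.univ xb (fun a => x s a)
    have hb2 : (∑ a, xb a ^ 2) ≤ 1 := by
      simp only [sq]; rw [hxb2]; linarith
    have hx2 : (∑ a, x s a ^ 2) ≤ 1 := by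
      simpa only [sq] using hf1 s hs
    have hx2n : (0:ℝ) ≤ ∑ a, x s a ^ 2 := Finset.sum_nonneg fun a _ => sq_nonneg _
    have hb2n : (0:ℝ) ≤ ∑ a, xb a ^ 2 := Finset.sum_nonneg fun a _ => sq_nonneg _
    have : (g s) ^ 2 ≤ 1 := le_trans hcs (by nlinarith)
    exact le_trans (le_abs_self _) ((sq_le_one_iff_abs_le_one _).mp this)
  -- choose ε and T
  set ε : ℝ := (ybsq - δ) / 2 with hε
  have hεpos : 0 < ε := by simp only [hε]; linarith
  obtain ⟨T₁, hT₁⟩ := (Metric.tendsto_atTop.mp hlim) ε hεpos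
  set T : ℝ := max T₁ t₀ with hT
  have hTt₀ : t₀ ≤ T := le_max_right _ _
  have hgT : ∀ s, T ≤ s → g s ≤ 1 - ybsq + ε := by
    intro s hs
    have := hT₁ s (le_trans (le_max_left _ _) hs)
    rw [Real.dist_eq, abs_lt] at this
    rw [hxb2] at this
    linarith [this.2]
  refine ⟨max T ((T * (δ + ε) + ω) / ε), ?_⟩
  intro t ht
  have htT : T ≤ t := le_trans (le_max_left _ _) ht
  have htt₀ : t₀ ≤ t := le_trans hTt₀ htT
  have htε : T * (δ + ε) + ω ≤ ε * t := by
    have := le_trans (le_max_right _ _) ht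
    rw [div_le_iff₀ hεpos] at this
    linarith [this]
  -- integrability
  have hfint : ∀ a b : ℝ, IntervalIntegrable f MeasureTheory.volume a b :=
    fun a b => hfc.intervalIntegrable a b
  have hgint : ∀ a b : ℝ, IntervalIntegrable g MeasureTheory.volume a b :=
    fun a b => hgc.intervalIntegrable a b
  have hhint : ∀ a b : ℝ, IntervalIntegrable h MeasureTheory.volume a b :=
    fun a b => hhc.intervalIntegrable a b
  -- ∫ h = (t - t₀) - ∫ f
  have hsum_int : (∫ s in t₀..t, f s) + (∫ s in t₀..t, h s) = t - t₀ := by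
    rw [← intervalIntegral.integral_add (hfint t₀ t) (hhint t₀ t)]
    have : (∫ s in t₀..t, (f s + h s)) = ∫ s in t₀..t, (1:ℝ) := by
      apply intervalIntegral.integral_congr
      intro s hs
      rw [Set.uIcc_of_le htt₀] at hs
      exact hsphere s hs.1
    rw [this, intervalIntegral.integral_const]
    simp
  -- ∫ f ≤ ω + ∫ g
  have hfg : (∫ s in t₀..t, f s) ≤ ω + ∫ s in t₀..t, g s := by
    have := hint t htt₀
    rw [intervalIntegral.integral_sub (hfint t₀ t) (hgint t₀ t)] at this
    linarith
  -- bound ∫ g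
  have hg_split : (∫ s in t₀..t, g s) = (∫ s in t₀..T, g s) + ∫ s in T..t, g s :=
    (intervalIntegral.integral_add_adjacent_intervals (hgint t₀ T) (hgint T t)).symm
  have hg_first : (∫ s in t₀..T, g s) ≤ T - t₀ := by
    calc (∫ s in t₀..T, g s) ≤ ∫ s in t₀..T, (1:ℝ) := by
          apply intervalIntegral.integral_mono_on hTt₀ (hgint t₀ T)
            (intervalIntegrable_const)
          intro s hs
          exact hg1 s hs.1
      _ = T - t₀ := by rw [intervalIntegral.integral_const]; simp
  have hg_second : (∫ s in T..t, g s) ≤ (t - T) * (1 - ybsq + ε) := by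
    calc (∫ s in T..t, g s) ≤ ∫ s in T..t, (1 - ybsq + ε) := by
          apply intervalIntegral.integral_mono_on htT (hgint T t)
            (intervalIntegrable_const)
          intro s hs
          exact hgT s hs.1
      _ = (t - T) * (1 - ybsq + ε) := by rw [intervalIntegral.integral_const]; simp
  have hεδ : ybsq - ε = δ + ε := by simp only [hε]; ring
  show δ * t ≤ ∫ s in t₀..t, h s
  nlinarith [hsum_int, hfg, hg_split, hg_first, hg_second, htε]
end
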